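/- arXiv:1904.09623 — 2 statements merged into one kernel-verified Lean document; each statement's English description precedes it below -/
import Mathlib

section
/- Let α ∈ ℝ^{N×N} be bi-stochastic, let κ ≥ 1, let W ∈ ℝ^N have strictly positive entries, and let g ∈ ℝ^N satisfy κ^{−1} ≤ g_j ≤ κ for all j. Define W'_i = Σ_{j=1}^N α_{ij} W_j g_j, and the normalised vectors W̄_j = W_j / Σ_k W_k and W̄'_i = W'_i / Σ_k W'_k. Then ‖W̄'‖² ≤ κ⁴ ( (1 − λ(α)²)/N + λ(α)² ‖W̄‖² ), where ‖·‖ is the Euclidean norm. -/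
open scoped BigOperators

/-- The Euclidean norm of a vector in `ℝ^N`. -/
noncomputable def eucNorm {N : ℕ} (v : Fin N → ℝ) : ℝ := Real.sqrt (∑ i, v i ^ 2)

/-- A matrix is bi-stochastic if it has nonnegative entries and every row sum and
every column sum equals `1`. -/
def BiStochastic {N : ℕ} (α : Matrix (Fin N) (Fin N) ℝ) : Prop :=
  (∀ i j, 0 ≤ α i j) ∧ (∀ i, ∑ j, α i j = 1) ∧ (∀ j, ∑ i, α i j = 1)

/-- The mixing constant `λ(α) = sup { ‖αv‖ : ‖v‖ = 1, ⟨v, 1⟩ = 0 }`. -/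
noncomputable def mixConst {N : ℕ} (α : Matrix (Fin N) (Fin N) ℝ) : ℝ :=
  sSup {r : ℝ | ∃ v : Fin N → ℝ, eucNorm v = 1 ∧ (∑ i, v i) = 0 ∧ r = eucNorm (α.mulVec v)}

/-!
Put `v = W / ∑ W`. The unnormalised `W'` is `α (W g)`, and as `α` has nonnegative entries,
`κ⁻¹ αW ≤ W' ≤ κ αW` entrywise; normalising, `W̄' ≤ κ² αv` entrywise, whence the factor `κ⁴`.
For the probability vector `v`, write `v = 1/N + u` with `∑ u = 0`. Bi-stochasticity gives
`αv = 1/N + αu` with `∑ αu = 0`, so by Pythagoras and `‖αu‖ ≤ λ(α) ‖u‖`,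
`‖αv‖² = 1/N + ‖αu‖² ≤ 1/N + λ(α)² (‖v‖² - 1/N)`.
-/

open Finset Matrix

section eucNorm

variable {N : ℕ}

lemma eucNorm_eq_norm (v : Fin N → ℝ) : eucNorm v = ‖WithLp.toLp 2 v‖ := by
  simp [eucNorm, EuclideanSpace.norm_eq]

lemma eucNorm_sq (v : Fin N → ℝ) : eucNorm v ^ 2 = ∑ i, v i ^ 2 :=
  Real.sq_sqrt (sum_nonneg fun _ _ => sq_nonneg _)

lemma eucNorm_smul (c : ℝ) (v : Fin N → ℝ) : eucNorm (c • v) = |c| * eucNorm v := by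
  simp [eucNorm_eq_norm, norm_smul]

lemma eucNorm_pos {v : Fin N → ℝ} : 0 < eucNorm v ↔ v ≠ 0 := by
  simp [eucNorm_eq_norm]

lemma eucNorm_sq_le_of_le {c : ℝ} {v w : Fin N → ℝ} (hv : 0 ≤ v) (hvw : v ≤ c • w) :
    eucNorm v ^ 2 ≤ c ^ 2 * eucNorm w ^ 2 := by
  simp only [eucNorm_sq, mul_sum, ← mul_pow]
  exact sum_le_sum fun i _ => pow_le_pow_left₀ (hv i) (hvw i) 2

end eucNorm

section mixConst

variable {N : ℕ} (α : Matrix (Fin N) (Fin N) ℝ)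

lemma bddAbove_mixConst_set : BddAbove
    {r : ℝ | ∃ v : Fin N → ℝ, eucNorm v = 1 ∧ (∑ i, v i) = 0 ∧ r = eucNorm (α.mulVec v)} := by
  refine ⟨‖Matrix.toEuclideanCLM (𝕜 := ℝ) α‖, ?_⟩
  rintro r ⟨v, hv, -, rfl⟩
  have := (Matrix.toEuclideanCLM (𝕜 := ℝ) α).le_opNorm (WithLp.toLp 2 v)
  rw [eucNorm_eq_norm] at hv
  simpa [eucNorm_eq_norm, hv] using this

lemma eucNorm_mulVec_le_mixConst_mul {u : Fin N → ℝ} (hu : ∑ i, u i = 0) :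
    eucNorm (α *ᵥ u) ≤ mixConst α * eucNorm u := by
  rcases eq_or_ne u 0 with rfl | hu0
  · simp [eucNorm_eq_norm]
  have hc : 0 < eucNorm u := eucNorm_pos.mpr hu0
  have hmem := le_csSup (bddAbove_mixConst_set α)
    ⟨(eucNorm u)⁻¹ • u, by rw [eucNorm_smul, abs_inv, abs_of_pos hc, inv_mul_cancel₀ hc.ne'],
      by simp [Pi.smul_apply, ← mul_sum, hu], rfl⟩
  rw [mulVec_smul, eucNorm_smul, abs_inv, abs_of_pos hc, inv_mul_le_iff₀ hc] at hmem
  exact hmem.trans_eq (mul_comm _ _)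

end mixConst

lemma natCast_ne_zero_of_sum_eq_one {N : ℕ} {v : Fin N → ℝ} (hv : ∑ i, v i = 1) :
    (N : ℝ) ≠ 0 :=
  Nat.cast_ne_zero.mpr <| by
    rintro rfl
    simp at hv

lemma eucNorm_sq_eq_of_sum_eq_one {N : ℕ} {v : Fin N → ℝ} (hv : ∑ i, v i = 1) :
    eucNorm v ^ 2 = eucNorm (v - (N : ℝ)⁻¹ • 1) ^ 2 + (N : ℝ)⁻¹ := by
  have hN := natCast_ne_zero_of_sum_eq_one hv
  simp only [eucNorm_sq, Pi.sub_apply, Pi.smul_apply, Pi.one_apply, smul_eq_mul, mul_one, sub_sq,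
    sum_add_distrib, sum_sub_distrib, ← sum_mul, ← mul_sum, hv, sum_const, card_univ,
    Fintype.card_fin, nsmul_eq_mul]
  field_simp
  ring

lemma eucNorm_mulVec_sq_le {N : ℕ} {α : Matrix (Fin N) (Fin N) ℝ}
    (hα : α ∈ doublyStochastic ℝ (Fin N)) {v : Fin N → ℝ} (hv : ∑ i, v i = 1) :
    eucNorm (α *ᵥ v) ^ 2 ≤ (1 - mixConst α ^ 2) / N + mixConst α ^ 2 * eucNorm v ^ 2 := by
  set u := v - (N : ℝ)⁻¹ • 1
  have hu : ∑ i, u i = 0 := by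
    simp [u, sum_sub_distrib, hv, natCast_ne_zero_of_sum_eq_one hv]
  have hαu : α *ᵥ v - (N : ℝ)⁻¹ • 1 = α *ᵥ u := by
    rw [mulVec_sub, mulVec_smul, mulVec_one_of_mem_doublyStochastic hα]
  have hαv : ∑ i, (α *ᵥ v) i = 1 := (sum_mulVec_of_mem_doublyStochastic hα).trans hv
  have hmix : eucNorm (α *ᵥ u) ^ 2 ≤ mixConst α ^ 2 * eucNorm u ^ 2 := by
    rw [← mul_pow]
    exact pow_le_pow_left₀ (Real.sqrt_nonneg _) (eucNorm_mulVec_le_mixConst_mul α hu) 2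
  rw [eucNorm_sq_eq_of_sum_eq_one hαv, hαu, eucNorm_sq_eq_of_sum_eq_one hv]
  linear_combination hmix

lemma mulVec_le_mulVec_of_nonneg {m n R : Type*} [Fintype n] [Semiring R] [PartialOrder R]
    [IsOrderedRing R] {A : Matrix m n R} (hA : ∀ i j, 0 ≤ A i j) {u v : n → R} (huv : u ≤ v) :
    A *ᵥ u ≤ A *ᵥ v :=
  fun i => dotProduct_le_dotProduct_of_nonneg_left huv (hA i)

lemma div_sum_le_sq_mul_div_sum {ι : Type*} [Fintype ι] {κ : ℝ} (hκ : 0 < κ) {x y : ι → ℝ}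
    (hx : 0 ≤ x) (hxy : κ⁻¹ • x ≤ y) (hyx : y ≤ κ • x) (hsum : 0 < ∑ j, x j)
    (i : ι) :
    y i / ∑ j, y j ≤ κ ^ 2 * (x i / ∑ j, x j) := by
  have hsum_le : (∑ j, x j) / κ ≤ ∑ j, y j := by
    rw [div_eq_inv_mul, mul_sum]
    exact sum_le_sum fun j _ => hxy j
  calc y i / ∑ j, y j ≤ κ * x i / ((∑ j, x j) / κ) :=
        div_le_div₀ (mul_nonneg hκ.le (hx i)) (hyx i) (div_pos hsum hκ) hsum_le
    _ = κ ^ 2 * (x i / ∑ j, x j) := by field_simp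

lemma eucNorm_div_sum_sq_le {N : ℕ} {κ : ℝ} (hκ : 0 < κ) {x y : Fin N → ℝ} (hx : 0 ≤ x)
    (hxy : κ⁻¹ • x ≤ y) (hyx : y ≤ κ • x) (hsum : 0 < ∑ j, x j) :
    eucNorm (fun i => y i / ∑ j, y j) ^ 2 ≤ κ ^ 4 * eucNorm (fun i => x i / ∑ j, x j) ^ 2 := by
  have hy : 0 ≤ y := (smul_nonneg (inv_nonneg.mpr hκ.le) hx).trans hxy
  rw [show κ ^ 4 = (κ ^ 2) ^ 2 by ring]
  exact eucNorm_sq_le_of_le (fun i => div_nonneg (hy i) (sum_nonneg fun j _ => hy j))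
    (div_sum_le_sq_mul_div_sum hκ hx hxy hyx hsum)

theorem stmt3 {N : ℕ} (α : Matrix (Fin N) (Fin N) ℝ) (hα : BiStochastic α)
    (κ : ℝ) (hκ : 1 ≤ κ)
    (W : Fin N → ℝ) (hW : ∀ j, 0 < W j)
    (g : Fin N → ℝ) (hg : ∀ j, κ⁻¹ ≤ g j ∧ g j ≤ κ) :
    eucNorm (fun i => (∑ j, α i j * W j * g j) / (∑ k, ∑ j, α k j * W j * g j)) ^ 2
      ≤ κ ^ 4 * ((1 - mixConst α ^ 2) / N
          + mixConst α ^ 2 * eucNorm (fun j => W j / ∑ k, W k) ^ 2) := by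
  rcases N.eq_zero_or_pos with rfl | hN
  · simp [eucNorm]
  have hα' : α ∈ doublyStochastic ℝ (Fin N) := mem_doublyStochastic_iff_sum.mpr hα
  have hκ0 : 0 < κ := one_pos.trans_le hκ
  have hS : 0 < ∑ j, W j := sum_pos (fun j _ => hW j) ⟨⟨0, hN⟩, mem_univ _⟩
  set Wg : Fin N → ℝ := fun j => W j * g j
  have hWg_ge : κ⁻¹ • W ≤ Wg := fun j => by
    simpa [Wg, mul_comm] using mul_le_mul_of_nonneg_left (hg j).1 (hW j).le
  have hWg_le : Wg ≤ κ • W := fun j => by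
    simpa [Wg, mul_comm] using mul_le_mul_of_nonneg_left (hg j).2 (hW j).le
  have hlhs : (fun i => (∑ j, α i j * W j * g j) / ∑ k, ∑ j, α k j * W j * g j)
      = fun i => (α *ᵥ Wg) i / ∑ k, (α *ᵥ Wg) k := by
    simp [Wg, mulVec, dotProduct, mul_assoc]
  have hrhs : α *ᵥ (fun j => W j / ∑ k, W k) = fun i => (α *ᵥ W) i / ∑ k, (α *ᵥ W) k := by
    rw [sum_mulVec_of_mem_doublyStochastic hα']
    ext i
    simp [mulVec, dotProduct, sum_div, mul_div_assoc]
  calc _ = eucNorm (fun i => (α *ᵥ Wg) i / ∑ k, (α *ᵥ Wg) k) ^ 2 := by rw [hlhs]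
    _ ≤ κ ^ 4 * eucNorm (α *ᵥ fun j => W j / ∑ k, W k) ^ 2 := by
        rw [hrhs]
        refine eucNorm_div_sum_sq_le hκ0
          (by simpa using mulVec_le_mulVec_of_nonneg (u := 0) hα.1 fun j => (hW j).le)
          (by simpa [mulVec_smul] using mulVec_le_mulVec_of_nonneg hα.1 hWg_ge)
          (by simpa [mulVec_smul] using mulVec_le_mulVec_of_nonneg hα.1 hWg_le) ?_
        rwa [sum_mulVec_of_mem_doublyStochastic hα']
    _ ≤ _ := by
        gcongr
        exact eucNorm_mulVec_sq_le hα' (by rw [← sum_div, div_self hS.ne'])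
end

section
/- Consider the α-SMC algorithm with randomised connectivity with parameter C, with potentials satisfying 0 < g_t(x) ≤ κ_g. Then for every t ≥ 1 and every measurable φ with |φ| ≤ 1, almost surely E[ (W_t^1)² φ(X_t^1) | F_{t−1} ] = (C N)^{−1} Σ_{j=1}^N (W_{t−1}^j)² g_{t−1}(X_{t−1}^j)² K_t φ(X_{t−1}^j) + (C−1) ( C N (N−1) )^{−1} Σ_{j ≠ j'} W_{t−1}^{j'} W_{t−1}^{j} g_{t−1}(X_{t−1}^{j'}) g_{t−1}(X_{t−1}^{j}) K_t φ(X_{t−1}^{j}). -/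
/-!
Put `𝒢 = F_t ⊔ σ(α_t)`. Given `𝒢`, the particle `X_{t+1}^1` follows the mixture law, so
`E[φ(X_{t+1}^1) | 𝒢] = (W_{t+1}^1)⁻¹ ∑_j α^{1j} W_t^j g_t(X_t^j) K_{t+1}φ(X_t^j)`, and since
`W_{t+1}^1 = ∑_j α^{1j} W_t^j g_t(X_t^j)` is `𝒢`-measurable, `E[(W_{t+1}^1)² φ(X_{t+1}^1) | 𝒢]`
is the double sum `∑_{j',j} α^{1j'} α^{1j} W_t^{j'} g_t(X_t^{j'}) W_t^j g_t(X_t^j) K_{t+1}φ(X_t^j)`.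
Conditioning on `F_t`, which is independent of `α_t`, replaces each `α^{1j'} α^{1j}` by its mean.
A fixed `k`-set lies in a uniform `C`-subset of `{1, …, N}` with probability
`choose C k / choose N k`, so this mean is `1 / (C N)` for `j = j'` and
`(C - 1) / (C N (N - 1))` otherwise.
-/

open MeasureTheory ProbabilityTheory Finset

section UniformSubset

variable {α : Type*} [Fintype α] [DecidableEq α]

theorem card_filter_card_eq_and_subset (u : Finset α) {C : ℕ} (hu : #u ≤ C) :
    #{s : Finset α | #s = C ∧ u ⊆ s} = (Fintype.card α - #u).choose (C - #u) := by
  rw [← card_compl, ← card_powersetCard]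
  refine card_nbij' (· \ u) (· ∪ u) ?_ ?_ ?_ ?_
  · intro s hs
    simp only [coe_filter, mem_univ, true_and, Set.mem_ofPred_eq, mem_coe,
      mem_powersetCard] at hs ⊢
    exact ⟨fun x hx => by simp [(mem_sdiff.mp hx).2], by rw [card_sdiff_of_subset hs.2, hs.1]⟩
  · intro t ht
    simp only [coe_filter, mem_univ, true_and, Set.mem_ofPred_eq, mem_coe, mem_powersetCard,
      subset_compl_iff_disjoint_right] at ht ⊢
    exact ⟨by rw [card_union_of_disjoint ht.1, ht.2]; omega, subset_union_right⟩
  · intro s hs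
    simp only [coe_filter, mem_univ, true_and, Set.mem_ofPred_eq] at hs
    exact sdiff_union_of_subset hs.2
  · intro t ht
    simp only [mem_coe, mem_powersetCard, subset_compl_iff_disjoint_right] at ht
    exact union_sdiff_cancel_right ht.1

-- Multiplied out, the count also covers `C < #u`, where both sides vanish.
theorem card_filter_card_eq_and_subset_mul_choose (u : Finset α) (C : ℕ) :
    #{s : Finset α | #s = C ∧ u ⊆ s} * (Fintype.card α).choose #u
      = (Fintype.card α).choose C * C.choose #u := by
  rcases le_or_gt #u C with hu | hu
  · rw [card_filter_card_eq_and_subset u hu, Nat.choose_mul hu, mul_comm]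
  · have : ({s : Finset α | #s = C ∧ u ⊆ s} : Finset _) = ∅ :=
      filter_eq_empty_iff.mpr fun s _ ⟨hs, hus⟩ => by have := card_le_card hus; omega
    simp [this, Nat.choose_eq_zero_of_lt hu]

variable {Ω : Type*} [MeasurableSpace Ω] (P : Measure Ω) {S : Ω → Finset α} {C : ℕ}

theorem measureReal_subset_of_uniform (hS : @Measurable Ω (Finset α) _ ⊤ S)
    (hC : C ≤ Fintype.card α) (hcard : ∀ ω, #(S ω) = C)
    (hunif : ∀ s : Finset α, #s = C → P {ω | S ω = s} = ((Fintype.card α).choose C : ENNReal)⁻¹)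
    (u : Finset α) :
    P.real {ω | u ⊆ S ω} = C.choose #u / (Fintype.card α).choose #u := by
  set T : Finset (Finset α) := {s | #s = C ∧ u ⊆ s}
  have hset : {ω | u ⊆ S ω} = S ⁻¹' T := by ext ω; simp [T, hcard]
  have hT : P.real {ω | u ⊆ S ω} = #T / (Fintype.card α).choose C := by
    have hfibre : ∀ s ∈ T, P (S ⁻¹' {s}) = _ := fun s hs => hunif s (mem_filter.mp hs).2.1
    rw [hset, measureReal_def, ← sum_measure_preimage_singleton T fun s _ => hS trivial,
      sum_congr rfl hfibre]
    simp [div_eq_mul_inv]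
  have hchoose {k : ℕ} (hk : k ≤ Fintype.card α) : ((Fintype.card α).choose k : ℝ) ≠ 0 := by
    exact_mod_cast (Nat.choose_pos hk).ne'
  rw [hT, div_eq_div_iff (hchoose hC) (hchoose (card_le_univ u))]
  exact_mod_cast (card_filter_card_eq_and_subset_mul_choose u C).trans (mul_comm _ _)

theorem integral_ite_mem_mul_ite_mem_of_uniform (hS : @Measurable Ω (Finset α) _ ⊤ S)
    (hC : C ≤ Fintype.card α) (hcard : ∀ ω, #(S ω) = C)
    (hunif : ∀ s : Finset α, #s = C → P {ω | S ω = s} = ((Fintype.card α).choose C : ENNReal)⁻¹)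
    (i j : α) :
    ∫ ω, (if i ∈ S ω then (C : ℝ)⁻¹ else 0) * (if j ∈ S ω then (C : ℝ)⁻¹ else 0) ∂P
      = if i = j then ((C : ℝ) * Fintype.card α)⁻¹
        else ((C : ℝ) - 1) * ((C : ℝ) * Fintype.card α * ((Fintype.card α : ℝ) - 1))⁻¹ := by
  have hind : (fun ω => (if i ∈ S ω then (C : ℝ)⁻¹ else 0) * (if j ∈ S ω then (C : ℝ)⁻¹ else 0))
      = {ω | {i, j} ⊆ S ω}.indicator fun _ => (C : ℝ)⁻¹ * (C : ℝ)⁻¹ := by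
    ext ω
    by_cases hi : i ∈ S ω <;> by_cases hj : j ∈ S ω <;> simp [hi, hj, insert_subset_iff]
  have hmeas : MeasurableSet {ω | {i, j} ⊆ S ω} :=
    hS (MeasurableSpace.measurableSet_top (s := {s | ({i, j} : Finset α) ⊆ s}))
  rw [hind, integral_indicator_const _ hmeas,
    measureReal_subset_of_uniform P hS hC hcard hunif, smul_eq_mul]
  rcases eq_or_ne (C : ℝ) 0 with hC0 | hC0
  · simp [hC0]
  split_ifs with hij
  · rw [hij, pair_eq_singleton, card_singleton, Nat.choose_one_right, Nat.choose_one_right]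
    field_simp
  · rw [card_pair hij, Nat.cast_choose_two, Nat.cast_choose_two]
    have hN : (2 : ℝ) ≤ Fintype.card α := by
      exact_mod_cast (card_pair hij).symm.trans_le (card_le_univ _)
    have : (Fintype.card α : ℝ) - 1 ≠ 0 := by linarith
    field_simp

end UniformSubset

theorem sum_prod_mul_ite_eq {ι R : Type*} [Fintype ι] [DecidableEq ι] [CommSemiring R]
    (f : ι × ι → R) (a b : R) :
    ∑ p : ι × ι, f p * (if p.1 = p.2 then a else b)
      = a * ∑ i, f (i, i) + b * ∑ p ∈ univ.offDiag, f p := by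
  rw [← univ_product_univ, ← diag_union_offDiag, sum_union (disjoint_diag_offDiag _), sum_diag,
    mul_sum, mul_sum]
  congr 1
  · exact sum_congr rfl fun i _ => by simp [mul_comm]
  · exact sum_congr rfl fun p hp => by simp [(mem_offDiag.mp hp).2.2, mul_comm]

section CondExp

variable {Ω ι : Type*} {m m' m0 : MeasurableSpace Ω} {P : Measure Ω}

theorem memLp_top_of_abs_le {f : Ω → ℝ} (hf : Measurable f) {M : ℝ} (hM : ∀ ω, |f ω| ≤ M) :
    MemLp f ⊤ P :=
  memLp_top_of_bound hf.aestronglyMeasurable M (ae_of_all _ hM)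

theorem abs_integral_le_of_abs_le {X : Type*} [MeasurableSpace X] {μ : Measure X}
    [IsProbabilityMeasure μ] {f : X → ℝ} {M : ℝ} (hf : ∀ x, |f x| ≤ M) : |∫ x, f x ∂μ| ≤ M := by
  simpa using norm_integral_le_of_norm_le_const (μ := μ)
    (ae_of_all _ fun x => (Real.norm_eq_abs _).trans_le (hf x))

theorem condExp_mul_eq_mul_integral_of_indep [IsFiniteMeasure P] (hm : m ≤ m0) (hm' : m' ≤ m0)
    (hind : Indep m' m P) {c a : Ω → ℝ} (hc : StronglyMeasurable[m] c)
    (ha : StronglyMeasurable[m'] a) (hca : Integrable (c * a) P) (ha_int : Integrable a P) :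
    P[c * a | m] =ᵐ[P] fun ω => c ω * ∫ ω', a ω' ∂P := by
  filter_upwards [condExp_mul_of_stronglyMeasurable_left hc hca ha_int,
    condExp_indep_eq hm' hm ha hind] with ω h1 h2
  rw [h1, Pi.mul_apply, h2]

theorem condExp_sum_mul_eq_sum_mul_integral_of_indep [IsFiniteMeasure P] (hm : m ≤ m0)
    (hm' : m' ≤ m0) (hind : Indep m' m P) (s : Finset ι) {c a : ι → Ω → ℝ}
    (hc : ∀ i, StronglyMeasurable[m] (c i)) (ha : ∀ i, StronglyMeasurable[m'] (a i))
    (hca : ∀ i, Integrable (c i * a i) P) (ha_int : ∀ i, Integrable (a i) P) :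
    P[∑ i ∈ s, c i * a i | m] =ᵐ[P] fun ω => ∑ i ∈ s, c i ω * ∫ ω', a i ω' ∂P := by
  have hall : ∀ᵐ ω ∂P, ∀ i ∈ s, P[c i * a i | m] ω = c i ω * ∫ ω', a i ω' ∂P :=
    (Filter.eventually_all_finset s).mpr fun i _ =>
      condExp_mul_eq_mul_integral_of_indep hm hm' hind (hc i) (ha i) (hca i) (ha_int i)
  filter_upwards [condExp_finsetSum (fun i _ => hca i) m, hall] with ω h1 h2
  rw [h1, Finset.sum_apply]
  exact sum_congr rfl h2

theorem condExp_sq_mul_eq_of_condExp_eq {𝒢 : MeasurableSpace Ω} {V Y Z : Ω → ℝ}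
    (hV : StronglyMeasurable[𝒢] V) (hVY : Integrable (fun ω => V ω ^ 2 * Y ω) P)
    (hY : Integrable Y P) (hcond : P[Y | 𝒢] =ᵐ[P] fun ω => (V ω)⁻¹ * Z ω) :
    P[fun ω => V ω ^ 2 * Y ω | 𝒢] =ᵐ[P] fun ω => V ω * Z ω := by
  filter_upwards [condExp_mul_of_stronglyMeasurable_left (hV.pow 2) hVY hY, hcond] with ω h1 h2
  change P[V ^ 2 * Y | 𝒢] ω = _
  rw [h1, Pi.mul_apply, Pi.pow_apply, h2]
  rcases eq_or_ne (V ω) 0 with h | h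
  · simp [h]
  · field_simp

theorem condExp_sq_mul_eq_sum_mul_integral_of_indep [IsFiniteMeasure P] [Fintype ι]
    {𝒢 : MeasurableSpace Ω} (hm𝒢 : m ≤ 𝒢) (hm'𝒢 : m' ≤ 𝒢) (h𝒢 : 𝒢 ≤ m0) (hind : Indep m' m P)
    {a x k : ι → Ω → ℝ} {V Y : Ω → ℝ} (hV : ∀ ω, V ω = ∑ j, a j ω * x j ω)
    (ha : ∀ j, StronglyMeasurable[m'] (a j)) (hx : ∀ j, StronglyMeasurable[m] (x j))
    (hk : ∀ j, StronglyMeasurable[m] (k j)) (ha' : ∀ j, MemLp (a j) ⊤ P)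
    (hx' : ∀ j, MemLp (x j) ⊤ P) (hk' : ∀ j, MemLp (k j) ⊤ P) (hY : MemLp Y ⊤ P)
    (hcond : P[Y | 𝒢] =ᵐ[P] fun ω => (V ω)⁻¹ * ∑ j, a j ω * x j ω * k j ω) :
    P[fun ω => V ω ^ 2 * Y ω | m] =ᵐ[P]
      fun ω => ∑ p : ι × ι, x p.1 ω * (x p.2 ω * k p.2 ω) * ∫ ω', a p.1 ω' * a p.2 ω' ∂P := by
  have hmul {f h : Ω → ℝ} (hf : MemLp f ⊤ P) (hh : MemLp h ⊤ P) : MemLp (f * h) ⊤ P := hh.mul hf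
  have hV_eq : V = ∑ j, a j * x j := funext fun ω => by simp [hV]
  have hV𝒢 : StronglyMeasurable[𝒢] V := hV_eq ▸ Finset.stronglyMeasurable_sum _
    fun j _ => ((ha j).mono hm'𝒢).mul ((hx j).mono hm𝒢)
  have hV' : MemLp V ⊤ P := hV_eq ▸ memLp_finsetSum' _ fun j _ => hmul (ha' j) (hx' j)
  have hsecond : P[fun ω => V ω ^ 2 * Y ω | 𝒢] =ᵐ[P]
      ∑ p : ι × ι, (fun ω => x p.1 ω * (x p.2 ω * k p.2 ω)) * fun ω => a p.1 ω * a p.2 ω := by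
    refine (condExp_sq_mul_eq_of_condExp_eq hV𝒢 ?_ (hY.integrable le_top) hcond).trans
      (.of_eq (funext fun ω => ?_))
    · exact ((hmul (hmul hV' hV') hY).integrable le_top).congr (ae_of_all _ fun ω => by simp [sq])
    · rw [hV, sum_mul_sum, Finset.sum_apply, ← univ_product_univ, sum_product]
      exact sum_congr rfl fun _ _ => sum_congr rfl fun _ _ => by simp only [Pi.mul_apply]; ring
  calc P[fun ω => V ω ^ 2 * Y ω | m]
      =ᵐ[P] P[P[fun ω => V ω ^ 2 * Y ω | 𝒢] | m] := (condExp_condExp_of_le hm𝒢 h𝒢).symm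
    _ =ᵐ[P] _ := condExp_congr_ae hsecond
    _ =ᵐ[P] _ := condExp_sum_mul_eq_sum_mul_integral_of_indep (hm𝒢.trans h𝒢) (hm'𝒢.trans h𝒢)
        hind univ (fun p => (hx p.1).mul ((hx p.2).mul (hk p.2)))
        (fun p => (ha p.1).mul (ha p.2))
        (fun p => (hmul (hmul (hx' p.1) (hmul (hx' p.2) (hk' p.2)))
          (hmul (ha' p.1) (ha' p.2))).integrable le_top)
        (fun p => (hmul (ha' p.1) (ha' p.2)).integrable le_top)

end CondExp

theorem condExp_comp_eq_of_condExp_prod {Ω ι X : Type*} [Fintype ι] [DecidableEq ι]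
    [MeasurableSpace X] {𝒢 m₀ : MeasurableSpace Ω} {P : Measure Ω} (κ : Kernel X X)
    [IsMarkovKernel κ] {Y Z : ι → Ω → X} {V : ι → Ω → ℝ} {M : ι → ι → Ω → ℝ}
    (hV : ∀ i ω, V i ω = ∑ j, M i j ω) (hV0 : ∀ i ω, V i ω ≠ 0)
    (hcond : ∀ ψ : ι → X → ℝ, (∀ i, Measurable (ψ i)) → (∀ i x, |ψ i x| ≤ 1) →
      P[fun ω => ∏ i, ψ i (Y i ω) | 𝒢]
        =ᵐ[P] fun ω => ∏ i, ((V i ω)⁻¹ * ∑ j, M i j ω * ∫ y, ψ i y ∂(κ (Z j ω))))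
    {φ : X → ℝ} (hφ : Measurable φ) (hφ1 : ∀ x, |φ x| ≤ 1) (i₀ : ι) :
    P[fun ω => φ (Y i₀ ω) | 𝒢]
      =ᵐ[P] fun ω => (V i₀ ω)⁻¹ * ∑ j, M i₀ j ω * ∫ y, φ y ∂(κ (Z j ω)) := by
  let ψ : ι → X → ℝ := fun i => if i = i₀ then φ else fun _ => 1
  have hψ : ∀ i, Measurable (ψ i) := fun i => by
    by_cases h : i = i₀ <;> simp [ψ, h, hφ]
  have hψ1 : ∀ i x, |ψ i x| ≤ 1 := fun i x => by
    by_cases h : i = i₀ <;> simp [ψ, h, hφ1]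
  have hfactor : ∀ i ω, (V i ω)⁻¹ * ∑ j, M i j ω * ∫ y, ψ i y ∂(κ (Z j ω))
      = if i = i₀ then (V i₀ ω)⁻¹ * ∑ j, M i₀ j ω * ∫ y, φ y ∂(κ (Z j ω)) else 1 := by
    intro i ω
    by_cases h : i = i₀
    · simp [ψ, h]
    · simp [ψ, h, ← hV, hV0]
  have h := hcond ψ hψ hψ1
  simp only [hfactor, prod_ite_eq', mem_univ, if_true] at h
  simpa [ψ, ite_apply] using h

theorem mul_mem_Ioc_pow_succ {w c κ : ℝ} {u : ℕ} (hw : w ∈ Set.Ioc 0 (κ ^ u))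
    (hc : c ∈ Set.Ioc 0 κ) : w * c ∈ Set.Ioc 0 (κ ^ (u + 1)) :=
  ⟨mul_pos hw.1 hc.1, pow_succ κ u ▸ mul_le_mul hw.2 hc.2 hc.1.le (hw.1.le.trans hw.2)⟩

section AlphaSMC

variable {Ω X : Type*} {N C : ℕ} {S : ℕ → Fin N → Ω → Finset (Fin N)}
  {A : ℕ → Ω → Matrix (Fin N) (Fin N) ℝ} {g : ℕ → X → ℝ} {ξ : ℕ → Fin N → Ω → X}
  {W : ℕ → Fin N → Ω → ℝ}

abbrev connectivitySigmaAlgebra (S : Fin N → Ω → Finset (Fin N)) : MeasurableSpace Ω :=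
  ⨆ i, MeasurableSpace.comap (S i) ⊤

theorem measurable_entry {m : MeasurableSpace Ω}
    (hA : ∀ t ω i j, A t ω i j = if j ∈ S t i ω then (C : ℝ)⁻¹ else 0) {t : ℕ} {i : Fin N}
    (hS : @Measurable Ω (Finset (Fin N)) m ⊤ (S t i)) (j : Fin N) :
    Measurable[m] fun ω => A t ω i j := by
  simp only [hA]
  exact (measurable_from_top (f := fun s : Finset (Fin N) => if j ∈ s then (C : ℝ)⁻¹ else 0)).comp
    hS

theorem measurable_weight_succ [MeasurableSpace X] {m : MeasurableSpace Ω}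
    (hA : ∀ t ω i j, A t ω i j = if j ∈ S t i ω then (C : ℝ)⁻¹ else 0)
    (hWrec : ∀ t i ω, W (t + 1) i ω = ∑ j, A t ω i j * W t j ω * g t (ξ t j ω))
    {t : ℕ} {i : Fin N} (hS : @Measurable Ω (Finset (Fin N)) m ⊤ (S t i))
    (hg : Measurable (g t)) (hξ : ∀ j, Measurable[m] (ξ t j)) (hW : ∀ j, Measurable[m] (W t j)) :
    Measurable[m] (W (t + 1) i) := by
  rw [show W (t + 1) i = _ from funext (hWrec t i)]
  exact Finset.measurable_sum _ fun j _ =>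
    ((measurable_entry hA hS j).mul (hW j)).mul (hg.comp (hξ j))

theorem measurable_weight [MeasurableSpace X] {F : ℕ → MeasurableSpace Ω} (hF : Monotone F)
    (hA : ∀ t ω i j, A t ω i j = if j ∈ S t i ω then (C : ℝ)⁻¹ else 0)
    (hS : ∀ t i, @Measurable Ω (Finset (Fin N)) (F (t + 1)) ⊤ (S t i))
    (hg : ∀ t, Measurable (g t)) (hξ : ∀ t i, Measurable[F t] (ξ t i)) (hW0 : ∀ i ω, W 0 i ω = 1)
    (hWrec : ∀ t i ω, W (t + 1) i ω = ∑ j, A t ω i j * W t j ω * g t (ξ t j ω))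
    (u : ℕ) (i : Fin N) :
    Measurable[F u] (W u i) := by
  induction u generalizing i with
  | zero => simp [show W 0 i = fun _ => 1 from funext (hW0 i)]
  | succ u ih =>
    have hFu := hF u.le_succ
    exact measurable_weight_succ hA hWrec (hS u i) (hg u) (fun j => (hξ u j).mono hFu le_rfl)
      fun j => (ih j).mono hFu le_rfl

theorem sum_entry_eq_one (hA : ∀ t ω i j, A t ω i j = if j ∈ S t i ω then (C : ℝ)⁻¹ else 0)
    (hScard : ∀ t i ω, #(S t i ω) = C) (hC : 1 ≤ C) (t : ℕ) (ω : Ω) (i : Fin N) :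
    ∑ j, A t ω i j = 1 := by
  have : (C : ℝ) ≠ 0 := by positivity
  simp [hA, sum_ite_mem, hScard, this]

theorem entry_mem_Icc (hA : ∀ t ω i j, A t ω i j = if j ∈ S t i ω then (C : ℝ)⁻¹ else 0)
    (hC : 1 ≤ C) (t : ℕ) (ω : Ω) (i j : Fin N) : A t ω i j ∈ Set.Icc 0 1 := by
  rw [hA]
  split_ifs
  · exact ⟨by positivity, inv_le_one_of_one_le₀ (by exact_mod_cast hC)⟩
  · simp

theorem abs_entry_le_one (hA : ∀ t ω i j, A t ω i j = if j ∈ S t i ω then (C : ℝ)⁻¹ else 0)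
    (hC : 1 ≤ C) (t : ℕ) (ω : Ω) (i j : Fin N) : |A t ω i j| ≤ 1 :=
  (abs_of_nonneg (entry_mem_Icc hA hC t ω i j).1).trans_le (entry_mem_Icc hA hC t ω i j).2

theorem weight_mem_Ioc {κg : ℝ}
    (hA : ∀ t ω i j, A t ω i j = if j ∈ S t i ω then (C : ℝ)⁻¹ else 0)
    (hScard : ∀ t i ω, #(S t i ω) = C) (hC : 1 ≤ C)
    (hgpos : ∀ t x, 0 < g t x) (hgbd : ∀ t x, g t x ≤ κg) (hW0 : ∀ i ω, W 0 i ω = 1)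
    (hWrec : ∀ t i ω, W (t + 1) i ω = ∑ j, A t ω i j * W t j ω * g t (ξ t j ω))
    (u : ℕ) (i : Fin N) (ω : Ω) : W u i ω ∈ Set.Ioc 0 (κg ^ u) := by
  induction u generalizing i with
  | zero => simp [hW0]
  | succ u ih =>
    simpa [hWrec, smul_eq_mul, mul_assoc] using
      (convex_Ioc _ _).sum_mem (fun j _ => (entry_mem_Icc hA hC u ω i j).1)
        (sum_entry_eq_one hA hScard hC u ω i)
        fun j _ => mul_mem_Ioc_pow_succ (ih j) ⟨hgpos _ _, hgbd _ _⟩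

end AlphaSMC

theorem stmt19_general
    -- the state space and the state-space model
    {X : Type*} [MeasurableSpace X]
    (K : ℕ → Kernel X X) (hK : ∀ t, IsMarkovKernel (K t))
    (g : ℕ → X → ℝ) (hgmeas : ∀ t, Measurable (g t)) (hgpos : ∀ t x, 0 < g t x)
    (κg : ℝ) (hgbd : ∀ t x, g t x ≤ κg)
    -- the underlying probability space
    {Ω : Type*} [m0 : MeasurableSpace Ω] (P : Measure Ω) [IsProbabilityMeasure P]
    -- the α-SMC particle system with `N` particles and randomised connectivity
    -- with parameter `C`
    (N C : ℕ) (hC : 1 ≤ C) (hCN : C ≤ N)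
    (F : ℕ → MeasurableSpace Ω) (hFle : ∀ t, F t ≤ m0) (hFmono : Monotone F)
    (ξ : ℕ → Fin N → Ω → X) (W : ℕ → Fin N → Ω → ℝ)
    -- `S t i` is the random set of the `C` nonzero entries of row `i` of `α_t`
    (S : ℕ → Fin N → Ω → Finset (Fin N))
    (A : ℕ → Ω → Matrix (Fin N) (Fin N) ℝ)
    (hA : ∀ t ω i j, A t ω i j = if j ∈ S t i ω then (C : ℝ)⁻¹ else 0)
    (hScard : ∀ t i ω, (S t i ω).card = C)
    (hSmeas : ∀ t i, @Measurable Ω (Finset (Fin N)) (F (t + 1)) ⊤ (S t i))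
    -- each row subset is uniformly distributed over the `C`-element subsets
    (hSunif : ∀ t i (s : Finset (Fin N)), s.card = C →
      P {ω | S t i ω = s} = (↑(N.choose C))⁻¹)
    -- `α_t` is independent of `F_t`
    (hSindep : ∀ t, Indep
      (⨆ i, MeasurableSpace.comap (S t i) (⊤ : MeasurableSpace (Finset (Fin N)))) (F t) P)
    (hξmeas : ∀ t i, Measurable[F t] (ξ t i))
    -- initial weights and weight recursion
    (hW0 : ∀ i ω, W 0 i ω = 1)
    (hWrec : ∀ t i ω, W (t + 1) i ω = ∑ j, A t ω i j * W t j ω * g t (ξ t j ω))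
    -- conditionally on `F t` and `α_t`, the particles at time `t+1` are independent with
    -- the prescribed mixture distributions
    (hcond : ∀ t (φ : Fin N → X → ℝ), (∀ i, Measurable (φ i)) → (∀ i x, |φ i x| ≤ 1) →
      P[(fun ω => ∏ i, φ i (ξ (t + 1) i ω)) |
          F t ⊔ (⨆ i, MeasurableSpace.comap (S t i) (⊤ : MeasurableSpace (Finset (Fin N))))]
        =ᵐ[P] fun ω => ∏ i, ((W (t + 1) i ω)⁻¹ *
            ∑ j, A t ω i j * W t j ω * g t (ξ t j ω) * ∫ y, φ i y ∂(K (t + 1) (ξ t j ω)))) :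
    -- conclusion: the conditional second-moment identity for the first particle
    ∀ t (φ : X → ℝ), Measurable φ → (∀ x, |φ x| ≤ 1) →
      P[(fun ω => (W (t + 1) (⟨0, lt_of_lt_of_le hC hCN⟩ : Fin N) ω) ^ 2 *
            φ (ξ (t + 1) (⟨0, lt_of_lt_of_le hC hCN⟩ : Fin N) ω)) | F t]
        =ᵐ[P] fun ω =>
          ((C : ℝ) * N)⁻¹ *
              ∑ j, (W t j ω) ^ 2 * (g t (ξ t j ω)) ^ 2 * ∫ y, φ y ∂(K (t + 1) (ξ t j ω))
            + ((C : ℝ) - 1) * ((C : ℝ) * N * ((N : ℝ) - 1))⁻¹ *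
                ∑ p ∈ (Finset.univ : Finset (Fin N)).offDiag,
                  W t p.1 ω * W t p.2 ω * g t (ξ t p.1 ω) * g t (ξ t p.2 ω) *
                    ∫ y, φ y ∂(K (t + 1) (ξ t p.2 ω)) := by
  intro t φ hφ hφ1
  have := hK (t + 1)
  have hW := weight_mem_Ioc hA hScard hC hgpos hgbd hW0 hWrec
  have hWm := measurable_weight hFmono hA hSmeas hgmeas hξmeas hW0 hWrec
  set i₀ : Fin N := ⟨0, lt_of_lt_of_le hC hCN⟩
  have h𝒜 : connectivitySigmaAlgebra (S t) ≤ m0 :=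
    iSup_le fun i => (hSmeas t i).comap_le.trans (hFle (t + 1))
  have hS : @Measurable Ω _ (connectivitySigmaAlgebra (S t)) ⊤ (S t i₀) :=
    (comap_measurable _).mono (le_iSup (fun i => MeasurableSpace.comap (S t i) ⊤) i₀) le_rfl
  have ha j := measurable_entry hA hS j
  have hx (j) : Measurable[F t] fun ω => W t j ω * g t (ξ t j ω) :=
    (hWm t j).mul ((hgmeas t).comp (hξmeas t j))
  have hk (j) : Measurable[F t] fun ω => ∫ y, φ y ∂K (t + 1) (ξ t j ω) :=
    (hφ.stronglyMeasurable.integral_kernel (κ := K (t + 1))).measurable.comp (hξmeas t j)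
  have hmean := condExp_comp_eq_of_condExp_prod (P := P) (K (t + 1)) (Y := ξ (t + 1)) (Z := ξ t)
    (M := fun i j ω => A t ω i j * W t j ω * g t (ξ t j ω)) (hWrec t)
    (fun i ω => (hW (t + 1) i ω).1.ne') (hcond t) hφ hφ1 i₀
  -- `a j = α_t^{i₀ j}` is `σ(α_t)`-measurable; `x j = W_t^j g_t(X_t^j)`, `k j = K_{t+1}φ(X_t^j)`
  -- are `F_t`-measurable.
  refine (condExp_sq_mul_eq_sum_mul_integral_of_indep le_sup_left le_sup_right
    (sup_le (hFle t) h𝒜) (hSindep t) (fun ω => (hWrec t i₀ ω).trans (by simp only [mul_assoc]))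
    (fun j => (ha j).stronglyMeasurable) (fun j => (hx j).stronglyMeasurable)
    (fun j => (hk j).stronglyMeasurable)
    (fun j => memLp_top_of_abs_le ((ha j).mono h𝒜 le_rfl) (abs_entry_le_one hA hC t · i₀ j))
    (fun j => memLp_top_of_abs_le ((hx j).mono (hFle t) le_rfl) fun ω => by
      obtain ⟨h0, h1⟩ := mul_mem_Ioc_pow_succ (hW t j ω) ⟨hgpos t (ξ t j ω), hgbd t _⟩
      exact (abs_of_pos h0).trans_le h1)
    (fun j => memLp_top_of_abs_le ((hk j).mono (hFle t) le_rfl) fun _ =>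
      abs_integral_le_of_abs_le hφ1)
    (memLp_top_of_abs_le (hφ.comp ((hξmeas _ _).mono (hFle _) le_rfl)) fun ω => hφ1 _)
    (hmean.trans (.of_eq (funext fun ω => by simp only [mul_assoc])))).trans
    (.of_eq (funext fun ω => ?_))
  simp only [hA, integral_ite_mem_mul_ite_mem_of_uniform P ((hSmeas t i₀).mono (hFle _) le_rfl)
    (by simpa using hCN) (hScard t i₀) (by simpa using hSunif t i₀), Fintype.card_fin,
    sum_prod_mul_ite_eq]
  congr 2 <;> exact sum_congr rfl fun _ _ => by ring

theorem stmt19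
    -- the state space and the state-space model
    {X : Type*} [MeasurableSpace X]
    (π₀ : Measure X) [IsProbabilityMeasure π₀]
    (K : ℕ → Kernel X X) (hK : ∀ t, IsMarkovKernel (K t))
    (g : ℕ → X → ℝ) (hgmeas : ∀ t, Measurable (g t)) (hgpos : ∀ t x, 0 < g t x)
    (κg : ℝ) (hgbd : ∀ t x, g t x ≤ κg)
    -- the underlying probability space
    {Ω : Type*} [m0 : MeasurableSpace Ω] (P : Measure Ω) [IsProbabilityMeasure P]
    -- the α-SMC particle system with `N` particles and randomised connectivity
    -- with parameter `C`
    (N C : ℕ) (hC : 1 ≤ C) (hCN : C ≤ N)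
    (F : ℕ → MeasurableSpace Ω) (hFle : ∀ t, F t ≤ m0) (hFmono : Monotone F)
    (ξ : ℕ → Fin N → Ω → X) (W : ℕ → Fin N → Ω → ℝ)
    -- `S t i` is the random set of the `C` nonzero entries of row `i` of `α_t`
    (S : ℕ → Fin N → Ω → Finset (Fin N))
    (A : ℕ → Ω → Matrix (Fin N) (Fin N) ℝ)
    (hA : ∀ t ω i j, A t ω i j = if j ∈ S t i ω then (C : ℝ)⁻¹ else 0)
    (hScard : ∀ t i ω, (S t i ω).card = C)
    (hSmeas : ∀ t i, @Measurable Ω (Finset (Fin N)) (F (t + 1)) ⊤ (S t i))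
    -- each row subset is uniformly distributed over the `C`-element subsets
    (hSunif : ∀ t i (s : Finset (Fin N)), s.card = C →
      P {ω | S t i ω = s} = (↑(N.choose C))⁻¹)
    -- the rows of the matrices `(α_t)` are mutually independent (over all times and rows)
    (hSiid : iIndepFun (m := fun _ : ℕ × Fin N => (⊤ : MeasurableSpace (Finset (Fin N))))
      (fun p => S p.1 p.2) P)
    -- `α_t` is independent of `F_t`
    (hSindep : ∀ t, Indep
      (⨆ i, MeasurableSpace.comap (S t i) (⊤ : MeasurableSpace (Finset (Fin N)))) (F t) P)
    (hξmeas : ∀ t i, Measurable[F t] (ξ t i))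
    -- initial weights and weight recursion
    (hW0 : ∀ i ω, W 0 i ω = 1)
    (hWrec : ∀ t i ω, W (t + 1) i ω = ∑ j, A t ω i j * W t j ω * g t (ξ t j ω))
    -- initialisation: i.i.d. samples from `π₀`
    (hξ0meas : ∀ i, Measurable (ξ 0 i))
    (hξ0indep : iIndepFun (ξ 0) P)
    (hξ0law : ∀ i, Measure.map (ξ 0 i) P = π₀)
    -- conditionally on `F t` and `α_t`, the particles at time `t+1` are independent with
    -- the prescribed mixture distributions
    (hcond : ∀ t (φ : Fin N → X → ℝ), (∀ i, Measurable (φ i)) → (∀ i x, |φ i x| ≤ 1) →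
      P[(fun ω => ∏ i, φ i (ξ (t + 1) i ω)) |
          F t ⊔ (⨆ i, MeasurableSpace.comap (S t i) (⊤ : MeasurableSpace (Finset (Fin N))))]
        =ᵐ[P] fun ω => ∏ i, ((W (t + 1) i ω)⁻¹ *
            ∑ j, A t ω i j * W t j ω * g t (ξ t j ω) * ∫ y, φ i y ∂(K (t + 1) (ξ t j ω)))) :
    -- conclusion: the conditional second-moment identity for the first particle
    ∀ t (φ : X → ℝ), Measurable φ → (∀ x, |φ x| ≤ 1) →
      P[(fun ω => (W (t + 1) (⟨0, lt_of_lt_of_le hC hCN⟩ : Fin N) ω) ^ 2 *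
            φ (ξ (t + 1) (⟨0, lt_of_lt_of_le hC hCN⟩ : Fin N) ω)) | F t]
        =ᵐ[P] fun ω =>
          ((C : ℝ) * N)⁻¹ *
              ∑ j, (W t j ω) ^ 2 * (g t (ξ t j ω)) ^ 2 * ∫ y, φ y ∂(K (t + 1) (ξ t j ω))
            + ((C : ℝ) - 1) * ((C : ℝ) * N * ((N : ℝ) - 1))⁻¹ *
                ∑ p ∈ (Finset.univ : Finset (Fin N)).offDiag,
                  W t p.1 ω * W t p.2 ω * g t (ξ t p.1 ω) * g t (ξ t p.2 ω) *
                    ∫ y, φ y ∂(K (t + 1) (ξ t p.2 ω)) :=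
  stmt19_general K hK g hgmeas hgpos κg hgbd (m0 := m0) P N C hC hCN F hFle hFmono ξ W S A hA hScard
    hSmeas hSunif hSindep hξmeas hW0 hWrec hcond
end
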